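/- arXiv:2602.12988 — 3 statements merged into one kernel-verified Lean document; each statement's English description precedes it below -/
import Mathlib

section
/- Let Q be a real d×d matrix all of whose complex eigenvalues have positive real part. Then there exists a constant B₁ > 0 (depending only on Q) such that for every x ∈ ℝ^d the integral P₁(x) = ∫₀¹ min(|s^Q x|, 1) ds/s is finite and satisfies P₁(x) ≤ B₁ · log(1 + |x|). -/
open MeasureTheory ProbabilityTheory Matrix Filter Topology

noncomputable section

/-- `s^Q = exp((log s) • Q)`, the matrix power given by the matrix exponential. -/
def mpow {d : ℕ} (Q : Matrix (Fin d) (Fin d) ℝ) (s : ℝ) : Matrix (Fin d) (Fin d) ℝ :=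
  NormedSpace.exp (Real.log s • Q)

/-- Action of the matrix power `s^Q` on Euclidean space by matrix-vector multiplication. -/
def mAct {d : ℕ} (Q : Matrix (Fin d) (Fin d) ℝ) (s : ℝ) (x : EuclideanSpace ℝ (Fin d)) :
    EuclideanSpace ℝ (Fin d) :=
  WithLp.toLp 2 ((mpow Q s).mulVec x)

/-- `Q ∈ M₊`: every complex eigenvalue of `Q` has positive real part. -/
def MPlus {d : ℕ} (Q : Matrix (Fin d) (Fin d) ℝ) : Prop :=
  ∀ z ∈ (Q.map (algebraMap ℝ ℂ)).charpoly.roots, 0 < z.re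

/-- `ν ∈ H`: a probability measure on `ℝ^d` with `∫_{‖x‖>1} log ‖x‖ ν(dx) < ∞`. -/
def ClassH {d : ℕ} (ν : Measure (EuclideanSpace ℝ (Fin d))) : Prop :=
  IsProbabilityMeasure ν ∧
    (∫⁻ x in {x : EuclideanSpace ℝ (Fin d) | 1 < ‖x‖}, ENNReal.ofReal (Real.log ‖x‖) ∂ν) < ⊤

/-- The uniform distribution on `[0,1]`. -/
def unif01 : Measure ℝ := volume.restrict (Set.Icc (0:ℝ) 1)

/-- The operator Dickman fixed-point equation `D(Q, ν)`: the law of `U^Q (X' + W)` equals `μ`,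
where `U ~ Unif[0,1]`, `X' ~ μ`, `W ~ ν` are mutually independent. -/
def IsOpDickman {d : ℕ} (Q : Matrix (Fin d) (Fin d) ℝ)
    (ν μ : Measure (EuclideanSpace ℝ (Fin d))) : Prop :=
  Measure.map (fun p : ℝ × (EuclideanSpace ℝ (Fin d) × EuclideanSpace ℝ (Fin d)) =>
      mAct Q p.1 (p.2.1 + p.2.2)) (unif01.prod (μ.prod ν)) = μ

/-- The scalar Dickman fixed-point equation `D((1/θ)I, ν)` on `ℝ^d`: the law of
`U^{1/θ} (X' + W)` equals `μ`, for `U ~ Unif[0,1]`, `X' ~ μ`, `W ~ ν` mutually independent. -/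
def IsScalarDickman {d : ℕ} (θ : ℝ) (ν μ : Measure (EuclideanSpace ℝ (Fin d))) : Prop :=
  Measure.map (fun p : ℝ × (EuclideanSpace ℝ (Fin d) × EuclideanSpace ℝ (Fin d)) =>
      p.1 ^ (1/θ) • (p.2.1 + p.2.2)) (unif01.prod (μ.prod ν)) = μ

/-- The characteristic function `μ̂(z) = ∫ e^{i z·x} μ(dx)` of a measure on `ℝ^d`. -/
def charFn {d : ℕ} (μ : Measure (EuclideanSpace ℝ (Fin d))) (z : EuclideanSpace ℝ (Fin d)) : ℂ :=
  ∫ x, Complex.exp (Complex.I * ((inner ℝ z x : ℝ) : ℂ)) ∂μ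

/-! With `t = -log s` we have `s^Q = exp(-t Q)`. Every eigenvalue of `exp(-Q)` has the form
`exp(-z)` with `z` an eigenvalue of `Q`, so the spectral radius of `exp(-Q)` is `< 1`, and
Gelfand's formula yields `‖s^Q‖ ≤ C s^a` on `(0, 1]` for some `a > 0`. Then, with `K = C ‖x‖`,
`min(‖s^Q x‖, 1) ≤ min(1, K s^a) ≤ 2 K s^a / (1 + K s^a)`, and the last function integrates
against `ds/s` to `(2/a) log(1 + K)`. Finally `log(1 + C ‖x‖) ≤ C log(1 + ‖x‖)` by Bernoulli's
inequality. -/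

open Set
open scoped NNReal

section BanachAlgebra

variable {A : Type*} [NormedRing A] [NormedAlgebra ℂ A] [CompleteSpace A]

theorem exists_norm_pow_le_mul_pow_of_spectralRadius_lt {b : A} {ρ : ℝ≥0}
    (h : spectralRadius ℂ b < ρ) : ∃ C : ℝ, ∀ n : ℕ, ‖b ^ n‖ ≤ C * ρ ^ n := by
  have hρ : 0 < (ρ : ℝ) := NNReal.coe_pos.mpr (ENNReal.coe_pos.mp (pos_of_gt h))
  have hev : ∀ᶠ n : ℕ in atTop, ‖b ^ n‖ / ρ ^ n ≤ 1 := by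
    have hgelfand := spectrum.pow_nnnorm_pow_one_div_tendsto_nhds_spectralRadius b
    filter_upwards [hgelfand.eventually_lt_const h, eventually_gt_atTop 0] with n hn hn0
    rw [one_div, ENNReal.rpow_inv_lt_iff (by positivity), ENNReal.rpow_natCast, ← ENNReal.coe_pow,
      ENNReal.coe_lt_coe, ← NNReal.coe_lt_coe, coe_nnnorm, NNReal.coe_pow] at hn
    exact (div_le_one (by positivity)).mpr hn.le
  obtain ⟨C, hC⟩ := (isBoundedUnder_of_eventually_le hev).bddAbove_range
  exact ⟨C, fun n => (div_le_iff₀ (by positivity)).mp (hC (mem_range_self n))⟩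

theorem exists_norm_exp_smul_le_mul_rpow_of_spectralRadius_exp_lt {a : A} {ρ : ℝ≥0}
    (h : spectralRadius ℂ (NormedSpace.exp a) < ρ) (hρ1 : ρ ≤ 1) :
    ∃ C : ℝ, ∀ t : ℝ, 0 ≤ t → ‖NormedSpace.exp ((t : ℂ) • a)‖ ≤ C * (ρ : ℝ) ^ t := by
  let +nondep : NormedAlgebra ℚ A := .restrictScalars ℚ ℂ A
  have hρ : 0 < (ρ : ℝ) := NNReal.coe_pos.mpr (ENNReal.coe_pos.mp (pos_of_gt h))
  obtain ⟨C, hC⟩ := exists_norm_pow_le_mul_pow_of_spectralRadius_lt h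
  have hC0 : 0 ≤ C := by simpa using (norm_nonneg _).trans (hC 0)
  obtain ⟨M, hM⟩ := isCompact_Icc.exists_bound_of_continuousOn
    (NormedSpace.exp_continuous.comp (Complex.continuous_ofReal.smul continuous_const)).continuousOn
    (f := fun r : ℝ => NormedSpace.exp ((r : ℂ) • a)) (s := Icc 0 1)
  have hM0 : 0 ≤ M := (norm_nonneg _).trans (hM 0 ⟨le_rfl, zero_le_one⟩)
  refine ⟨C * M / ρ, fun t ht => ?_⟩
  set n := ⌊t⌋₊
  have hsplit : NormedSpace.exp ((t : ℂ) • a)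
      = NormedSpace.exp a ^ n * NormedSpace.exp (((t - n : ℝ) : ℂ) • a) := by
    rw [← NormedSpace.exp_nsmul, ← NormedSpace.exp_add_of_commute
      (((Commute.refl a).smul_right _).smul_left _)]
    congr 1
    push_cast
    rw [← Nat.cast_smul_eq_nsmul ℂ, ← add_smul, add_sub_cancel]
  have hfrac : t - n ∈ Icc (0 : ℝ) 1 :=
    ⟨sub_nonneg.mpr (Nat.floor_le ht), by linarith [Nat.lt_floor_add_one t]⟩
  have hpow : (ρ : ℝ) ^ n ≤ ρ ^ t / ρ := by
    rw [← Real.rpow_natCast, ← Real.rpow_sub_one hρ.ne']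
    exact Real.rpow_le_rpow_of_exponent_ge hρ hρ1 (by linarith [Nat.lt_floor_add_one t])
  calc ‖NormedSpace.exp ((t : ℂ) • a)‖
      ≤ ‖NormedSpace.exp a ^ n‖ * ‖NormedSpace.exp (((t - n : ℝ) : ℂ) • a)‖ := by
        rw [hsplit]; exact norm_mul_le _ _
    _ ≤ C * (ρ ^ t / ρ) * M := by
        gcongr
        · exact (hC n).trans (by gcongr)
        · exact hM _ hfrac
    _ = C * M / ρ * ρ ^ t := by ring

end BanachAlgebra

section Spectral

open scoped Matrix.Norms.L2Operator

variable {n : Type*} [Fintype n] [DecidableEq n]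

theorem Matrix.exp_mulVec_of_mulVec_eq_smul {N : Matrix n n ℂ} {v : n → ℂ} {z : ℂ}
    (h : N *ᵥ v = z • v) : NormedSpace.exp N *ᵥ v = Complex.exp z • v := by
  have hpow : ∀ k : ℕ, N ^ k *ᵥ v = z ^ k • v := by
    intro k
    induction k with
    | zero => simp
    | succ k ih =>
      rw [pow_succ', ← Matrix.mulVec_mulVec, ih, Matrix.mulVec_smul, h, smul_smul, pow_succ]
  have hN := (NormedSpace.exp_series_hasSum_exp' (𝕂 := ℂ) N).map
    (Matrix.mulVec.addMonoidHomLeft v) (continuous_id.matrix_mulVec continuous_const)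
  have hz := (NormedSpace.exp_series_hasSum_exp' (𝕂 := ℂ) z).smul_const v
  rw [← Complex.exp_eq_exp_ℂ] at hz
  refine hN.unique (hz.congr_fun fun k => ?_)
  simp [Matrix.mulVec.addMonoidHomLeft, Matrix.smul_mulVec, hpow, smul_smul]

theorem Matrix.spectrum_exp_subset (N : Matrix n n ℂ) :
    spectrum ℂ (NormedSpace.exp N) ⊆ Complex.exp '' spectrum ℂ N := by
  -- `N` preserves the `μ`-eigenspace of `exp N`, hence has an eigenvector `w` in it, and then
  -- `μ • w = exp N *ᵥ w = exp z • w`.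
  intro μ hμ
  set f : Module.End ℂ (n → ℂ) := Matrix.toLin' N
  set g : Module.End ℂ (n → ℂ) := Matrix.toLin' (NormedSpace.exp N)
  have hg : Module.End.HasEigenvalue g μ := by
    rwa [Module.End.hasEigenvalue_iff_mem_spectrum, Matrix.spectrum_toLin']
  have hfg : Commute g f := ((Commute.refl N).exp_right).symm.map Matrix.toLinAlgEquiv'
  have hmaps := Module.End.mapsTo_genEigenspace_of_comm hfg μ 1
  have : Nontrivial (Module.End.eigenspace g μ) := Submodule.nontrivial_iff_ne_bot.mpr hg
  obtain ⟨z, hz⟩ := Module.End.exists_eigenvalue (f.restrict hmaps)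
  obtain ⟨⟨w, hwμ⟩, hwz⟩ := hz.exists_hasEigenvector
  have hw0 : w ≠ 0 := fun h => hwz.2 (Subtype.ext h)
  have hfw : N *ᵥ w = z • w := congrArg Subtype.val (Module.End.mem_eigenspace_iff.mp hwz.1)
  have hgw : NormedSpace.exp N *ᵥ w = μ • w := Module.End.mem_eigenspace_iff.mp hwμ
  refine ⟨z, ?_, smul_left_injective ℂ hw0 ?_⟩
  · rw [← Matrix.spectrum_toLin']
    exact (Module.End.hasEigenvalue_of_hasEigenvector
      ⟨Module.End.mem_eigenspace_iff.mpr hfw, hw0⟩).mem_spectrum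
  · show Complex.exp z • w = μ • w
    rw [← Matrix.exp_mulVec_of_mulVec_eq_smul hfw, hgw]

theorem Matrix.spectralRadius_exp_neg_lt_one {N : Matrix n n ℂ}
    (h : ∀ z ∈ spectrum ℂ N, 0 < z.re) : spectralRadius ℂ (NormedSpace.exp (-N)) < 1 := by
  rcases (spectrum ℂ (NormedSpace.exp (-N))).eq_empty_or_nonempty with he | hne
  · simp [spectralRadius, he]
  · rw [← ENNReal.coe_one]
    refine spectrum.spectralRadius_lt_of_forall_lt_of_nonempty hne fun μ hμ => ?_
    obtain ⟨z, hz, rfl⟩ := Matrix.spectrum_exp_subset _ hμ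
    rw [← spectrum.neg_eq] at hz
    have := h (-z) hz
    rw [← NNReal.coe_lt_coe, coe_nnnorm, Complex.norm_exp, NNReal.coe_one, Real.exp_lt_one_iff]
    simpa using this

theorem Matrix.exists_norm_exp_log_smul_le_mul_rpow {N : Matrix n n ℂ}
    (h : ∀ z ∈ spectrum ℂ N, 0 < z.re) :
    ∃ a C : ℝ, 0 < a ∧ ∀ s ∈ Ioc (0 : ℝ) 1,
      ‖NormedSpace.exp ((Real.log s : ℂ) • N)‖ ≤ C * s ^ a := by
  obtain ⟨ρ, hρ, hρ1⟩ := ENNReal.lt_iff_exists_nnreal_btwn.mp (spectralRadius_exp_neg_lt_one h)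
  have hρ0 : 0 < (ρ : ℝ) := NNReal.coe_pos.mpr (ENNReal.coe_pos.mp (pos_of_gt hρ))
  have hρ1' : (ρ : ℝ) < 1 := by exact_mod_cast ENNReal.coe_lt_one_iff.mp hρ1
  obtain ⟨C, hC⟩ := exists_norm_exp_smul_le_mul_rpow_of_spectralRadius_exp_lt hρ hρ1'.le
  refine ⟨-Real.log ρ, C, neg_pos.mpr (Real.log_neg hρ0 hρ1'), fun s hs => ?_⟩
  convert hC (-Real.log s) (neg_nonneg.mpr (Real.log_nonpos hs.1.le hs.2)) using 2
  · push_cast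
    rw [neg_smul_neg]
  · rw [Real.rpow_def_of_pos hs.1, Real.rpow_def_of_pos hρ0]
    ring_nf

theorem Matrix.norm_toLp_mulVec_le_norm_map_algebraMap (M : Matrix n n ℝ) (x : EuclideanSpace ℝ n) :
    ‖WithLp.toLp 2 (M *ᵥ x)‖ ≤ ‖M.map (algebraMap ℝ ℂ)‖ * ‖x‖ := by
  have hnorm : ∀ v : n → ℝ, ‖WithLp.toLp 2 (fun i => (v i : ℂ))‖ = ‖WithLp.toLp 2 v‖ := by
    intro v
    simp [EuclideanSpace.norm_eq]
  have h := Matrix.l2_opNorm_mulVec (M.map (algebraMap ℝ ℂ)) (WithLp.toLp 2 fun i => (x i : ℂ))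
  have hmul : M.map Complex.ofReal *ᵥ (fun i => (x i : ℂ)) = fun i => ((M *ᵥ x) i : ℂ) := by
    ext i
    exact (Complex.ofRealHom.map_mulVec M x i).symm
  simpa [hmul, hnorm] using h

end Spectral

section RealMatrix

open scoped Matrix.Norms.L2Operator

variable {d : ℕ}

theorem map_mpow (Q : Matrix (Fin d) (Fin d) ℝ) (s : ℝ) :
    (mpow Q s).map (algebraMap ℝ ℂ)
      = NormedSpace.exp ((Real.log s : ℂ) • Q.map (algebraMap ℝ ℂ)) := by
  let +nondep : NormedAlgebra ℚ (Matrix (Fin d) (Fin d) ℝ) := .restrictScalars ℚ ℝ _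
  rw [mpow, ← RingHom.mapMatrix_apply, NormedSpace.map_exp _ (continuous_id.matrix_map
    Complex.continuous_ofReal)]
  congr 1
  ext i j
  simp

theorem measurable_mAct (Q : Matrix (Fin d) (Fin d) ℝ) (x : EuclideanSpace ℝ (Fin d)) :
    Measurable fun s => mAct Q s x := by
  let +nondep : NormedAlgebra ℚ (Matrix (Fin d) (Fin d) ℝ) := .restrictScalars ℚ ℝ _
  have hcont : Continuous fun u : ℝ => WithLp.toLp 2 (NormedSpace.exp (u • Q) *ᵥ x) :=
    (PiLp.continuous_toLp 2 _).comp ((NormedSpace.exp_continuous.comp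
      (continuous_id.smul continuous_const)).matrix_mulVec continuous_const)
  exact hcont.measurable.comp Real.measurable_log

theorem exists_norm_mAct_le_mul_rpow {Q : Matrix (Fin d) (Fin d) ℝ} (hQ : MPlus Q) :
    ∃ a C : ℝ, 0 < a ∧ 1 ≤ C ∧ ∀ s ∈ Ioc (0 : ℝ) 1, ∀ x : EuclideanSpace ℝ (Fin d),
      ‖mAct Q s x‖ ≤ C * ‖x‖ * s ^ a := by
  have hspec : ∀ z ∈ spectrum ℂ (Q.map (algebraMap ℝ ℂ)), 0 < z.re := fun z hz =>
    hQ z ((Polynomial.mem_roots (Matrix.charpoly_monic _).ne_zero).mpr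
      (Matrix.mem_spectrum_iff_isRoot_charpoly.mp hz))
  obtain ⟨a, C, ha, hC⟩ := Matrix.exists_norm_exp_log_smul_le_mul_rpow hspec
  refine ⟨a, max C 1, ha, le_max_right _ _, fun s hs x => ?_⟩
  calc ‖mAct Q s x‖ ≤ ‖(mpow Q s).map (algebraMap ℝ ℂ)‖ * ‖x‖ :=
      Matrix.norm_toLp_mulVec_le_norm_map_algebraMap _ x
    _ ≤ C * s ^ a * ‖x‖ := by
        rw [map_mpow]
        gcongr
        exact hC s hs
    _ ≤ max C 1 * ‖x‖ * s ^ a := by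
        rw [mul_right_comm]
        have := Real.rpow_nonneg hs.1.le a
        gcongr
        exact le_max_left _ _

end RealMatrix

section Integral

variable {a K : ℝ}

theorem hasDerivAt_log_one_add_mul_rpow (hK : 0 ≤ K) {s : ℝ} (hs : 0 < s) :
    HasDerivAt (fun s => Real.log (1 + K * s ^ a))
      (a * (K * s ^ a / (1 + K * s ^ a)) / s) s := by
  have h1 : 0 < 1 + K * s ^ a := by positivity
  convert (((Real.hasDerivAt_rpow_const (p := a) (Or.inl hs.ne')).const_mul K).const_add 1).log
    h1.ne' using 1
  rw [Real.rpow_sub_one hs.ne']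
  field_simp

theorem integrableOn_and_setIntegral_deriv_log_one_add_mul_rpow (ha : 0 < a) (hK : 0 ≤ K) :
    IntegrableOn (fun s => a * (K * s ^ a / (1 + K * s ^ a)) / s) (Ioc 0 1) ∧
      ∫ s in Ioc (0 : ℝ) 1, a * (K * s ^ a / (1 + K * s ^ a)) / s = Real.log (1 + K) := by
  have hcont : ContinuousOn (fun s : ℝ => Real.log (1 + K * s ^ a)) (Icc 0 1) := by
    refine ContinuousOn.log ?_ fun s hs => ?_
    · exact (continuousOn_const.mul
        (continuousOn_id.rpow_const fun _ _ => Or.inr ha.le)).const_add 1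
    · have := hs.1
      positivity
  have hderiv : ∀ s ∈ Ioo (0 : ℝ) 1, HasDerivAt (fun s => Real.log (1 + K * s ^ a))
      (a * (K * s ^ a / (1 + K * s ^ a)) / s) s := fun s hs =>
    hasDerivAt_log_one_add_mul_rpow hK hs.1
  have hint := intervalIntegral.integrableOn_deriv_of_nonneg hcont hderiv fun s hs => by
    have := hs.1
    positivity
  refine ⟨hint, ?_⟩
  rw [← intervalIntegral.integral_of_le zero_le_one,
    intervalIntegral.integral_eq_sub_of_hasDerivAt_of_le zero_le_one hcont hderiv
      ((intervalIntegrable_iff_integrableOn_Ioc_of_le zero_le_one).mpr hint)]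
  simp [Real.zero_rpow ha.ne']

theorem min_one_le_two_mul_div_one_add {u : ℝ} (hu : 0 ≤ u) : min 1 u ≤ 2 * (u / (1 + u)) := by
  rw [← mul_div_assoc, le_div_iff₀ (by positivity)]
  rcases le_total u 1 with h | h
  · rw [min_eq_right h]; nlinarith
  · rw [min_eq_left h]; linarith

theorem integrableOn_div_self_and_setIntegral_le (ha : 0 < a) (hK : 0 ≤ K) {f : ℝ → ℝ}
    (hf : AEMeasurable f (volume.restrict (Ioc 0 1)))
    (hf_bound : ∀ s ∈ Ioc (0 : ℝ) 1, 0 ≤ f s ∧ f s ≤ min 1 (K * s ^ a)) :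
    IntegrableOn (fun s => f s / s) (Ioc 0 1) ∧
      ∫ s in Ioc (0 : ℝ) 1, f s / s ≤ 2 / a * Real.log (1 + K) := by
  obtain ⟨hg, hg_int⟩ := integrableOn_and_setIntegral_deriv_log_one_add_mul_rpow ha hK
  have hle : ∀ s ∈ Ioc (0 : ℝ) 1,
      f s / s ≤ 2 / a * (a * (K * s ^ a / (1 + K * s ^ a)) / s) := by
    intro s hs
    have hu : 0 ≤ K * s ^ a := mul_nonneg hK (Real.rpow_nonneg hs.1.le a)
    calc f s / s ≤ 2 * (K * s ^ a / (1 + K * s ^ a)) / s := by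
          gcongr
          · exact hs.1.le
          · exact (hf_bound s hs).2.trans (min_one_le_two_mul_div_one_add hu)
      _ = 2 / a * (a * (K * s ^ a / (1 + K * s ^ a)) / s) := by field_simp
  have hint : IntegrableOn (fun s => f s / s) (Ioc 0 1) := by
    refine (hg.const_mul (2 / a)).mono' (hf.div aemeasurable_id).aestronglyMeasurable ?_
    refine (ae_restrict_iff' measurableSet_Ioc).mpr (Eventually.of_forall fun s hs => ?_)
    rw [Real.norm_of_nonneg (div_nonneg (hf_bound s hs).1 hs.1.le)]
    exact hle s hs
  refine ⟨hint, ?_⟩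
  calc ∫ s in Ioc (0 : ℝ) 1, f s / s
      ≤ ∫ s in Ioc (0 : ℝ) 1, 2 / a * (a * (K * s ^ a / (1 + K * s ^ a)) / s) :=
        setIntegral_mono_on hint (hg.const_mul _) measurableSet_Ioc hle
    _ = 2 / a * Real.log (1 + K) := by rw [integral_const_mul, hg_int]

end Integral

theorem Real.log_one_add_mul_le_mul_log_one_add {c y : ℝ} (hc : 1 ≤ c) (hy : 0 ≤ y) :
    Real.log (1 + c * y) ≤ c * Real.log (1 + y) := by
  rw [← Real.log_rpow (by positivity)]
  exact Real.log_le_log (by positivity) (one_add_mul_self_le_rpow_one_add (by linarith) hc)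

/-- Lemma 1(i): for `Q ∈ M₊` there is `B₁ > 0` such that for every `x`,
`P₁(x) = ∫₀¹ min(‖s^Q x‖, 1) ds/s` is finite and `P₁(x) ≤ B₁ log(1 + ‖x‖)`. -/
theorem lemma1_part_i {d : ℕ} (Q : Matrix (Fin d) (Fin d) ℝ) (hQ : MPlus Q) :
    ∃ B₁ : ℝ, 0 < B₁ ∧ ∀ x : EuclideanSpace ℝ (Fin d),
      IntegrableOn (fun s : ℝ => min ‖mAct Q s x‖ 1 / s) (Set.Ioc 0 1) volume ∧
      (∫ s in Set.Ioc (0:ℝ) 1, min ‖mAct Q s x‖ 1 / s) ≤ B₁ * Real.log (1 + ‖x‖) := by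
  obtain ⟨a, C, ha, hC, hbound⟩ := exists_norm_mAct_le_mul_rpow hQ
  refine ⟨2 * C / a, by positivity, fun x => ?_⟩
  obtain ⟨hint, hle⟩ := integrableOn_div_self_and_setIntegral_le (K := C * ‖x‖)
    (f := fun s => min ‖mAct Q s x‖ 1)
    ha (by positivity) ((measurable_mAct Q x).norm.min measurable_const).aemeasurable
    fun s hs => ⟨by positivity, by rw [min_comm]; exact min_le_min_left 1 (hbound s hs x)⟩
  refine ⟨hint, hle.trans ?_⟩
  calc 2 / a * Real.log (1 + C * ‖x‖) ≤ 2 / a * (C * Real.log (1 + ‖x‖)) := by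
        gcongr
        exact Real.log_one_add_mul_le_mul_log_one_add hC (norm_nonneg x)
    _ = 2 * C / a * Real.log (1 + ‖x‖) := by ring

end
end

section
/- Let Q ∈ M₊, ν ∈ H, and let μ be a probability measure on ℝ^d satisfying the fixed-point equation defining D(Q,ν). Let t > 0 and let A be a real d×d matrix commuting with Q (AQ = QA). Then the pushforward measure t^A ν (the image of ν under x ↦ t^A x = exp((log t)·A) x) belongs to H, and the pushforward measure t^A μ satisfies the fixed-point equation defining D(Q, t^A ν); that is, the class D(Q, H) is closed under the transformations x ↦ t^A x. -/
open MeasureTheory ProbabilityTheory Matrix Filter Topology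

noncomputable section

/-! Since `A` commutes with `Q`, the linear map `t^A` commutes with every `s^Q` and with addition,
so pushing the fixed-point equation forward along `t^A` yields the fixed-point equation for the
pushforwards. The logarithmic moment survives any linear map `L`, because
`log⁺ ‖L x‖ ≤ log⁺ ‖L‖ + log⁺ ‖x‖`. -/

open Real ENNReal

lemma continuous_matrix_exp {d : ℕ} :
    Continuous (NormedSpace.exp : Matrix (Fin d) (Fin d) ℝ → Matrix (Fin d) (Fin d) ℝ) := by
  -- Matrices carry no global norm; any matrix norm induces their topology and makes `exp` analytic.
  let _ := Matrix.linftyOpNormedRing (n := Fin d) (α := ℝ)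
  let _ := Matrix.linftyOpNormedAlgebra (n := Fin d) (α := ℝ) (R := ℝ)
  exact continuous_iff_continuousAt.2 fun M => (NormedSpace.exp_analytic (𝕂 := ℝ) M).continuousAt

lemma mAct_eq_toEuclideanCLM {d : ℕ} (A : Matrix (Fin d) (Fin d) ℝ) (t : ℝ) :
    mAct A t = ⇑(Matrix.toEuclideanCLM (𝕜 := ℝ) (mpow A t)) :=
  rfl

lemma measurable_mAct_uncurry {d : ℕ} (Q : Matrix (Fin d) (Fin d) ℝ) :
    Measurable fun p : ℝ × EuclideanSpace ℝ (Fin d) => mAct Q p.1 p.2 := by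
  have hcont : Continuous fun p : ℝ × EuclideanSpace ℝ (Fin d) =>
      WithLp.toLp 2 (NormedSpace.exp (p.1 • Q) *ᵥ p.2.ofLp) :=
    (PiLp.continuous_toLp 2 _).comp <|
      (continuous_matrix_exp.comp (continuous_fst.smul continuous_const)).matrix_mulVec
        ((PiLp.continuous_ofLp 2 _).comp continuous_snd)
  exact hcont.measurable.comp (measurable_log.prodMap measurable_id)

lemma commute_mpow {d : ℕ} {Q A : Matrix (Fin d) (Fin d) ℝ} (h : Commute Q A) (s t : ℝ) :
    Commute (mpow Q s) (mpow A t) :=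
  ((h.smul_left _).smul_right _).exp

lemma mAct_mAct_comm {d : ℕ} {Q A : Matrix (Fin d) (Fin d) ℝ} (h : Commute Q A) (s t : ℝ)
    (x : EuclideanSpace ℝ (Fin d)) : mAct Q s (mAct A t x) = mAct A t (mAct Q s x) := by
  simp only [mAct, WithLp.ofLp_toLp, mulVec_mulVec, (commute_mpow h s t).eq]

instance isProbabilityMeasure_unif01 : IsProbabilityMeasure unif01 :=
  ⟨by simp [unif01]⟩

lemma setLIntegral_one_lt_norm_ofReal_log {E : Type*} [SeminormedAddGroup E] [MeasurableSpace E]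
    (ν : Measure E) :
    ∫⁻ x in {x : E | 1 < ‖x‖}, ENNReal.ofReal (log ‖x‖) ∂ν =
      ∫⁻ x, ENNReal.ofReal (log ‖x‖) ∂ν := by
  refine setLIntegral_eq_of_support_subset fun x hx => ?_
  rw [Function.mem_support, ne_eq, ENNReal.ofReal_eq_zero, not_le] at hx
  exact (log_pos_iff (norm_nonneg x)).1 hx

section LogMoment

variable {E F : Type*} [NormedAddCommGroup E] [NormedSpace ℝ E]
  [NormedAddCommGroup F] [NormedSpace ℝ F]

lemma ofReal_log_norm_apply_le (L : E →L[ℝ] F) (x : E) :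
    ENNReal.ofReal (log ‖L x‖) ≤ ENNReal.ofReal (log⁺ ‖L‖) + ENNReal.ofReal (log ‖x‖) := by
  have ofReal_posLog : ∀ r : ℝ, ENNReal.ofReal (log⁺ r) = ENNReal.ofReal (log r) := fun r => by
    simp only [posLog, ENNReal.ofReal_max, ENNReal.ofReal_zero, zero_le, sup_of_le_right]
  calc ENNReal.ofReal (log ‖L x‖) = ENNReal.ofReal (log⁺ ‖L x‖) := (ofReal_posLog _).symm
    _ ≤ ENNReal.ofReal (log⁺ ‖L‖ + log⁺ ‖x‖) := ENNReal.ofReal_le_ofReal <|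
        (posLog_le_posLog (norm_nonneg _) (L.le_opNorm x)).trans posLog_mul
    _ = ENNReal.ofReal (log⁺ ‖L‖) + ENNReal.ofReal (log ‖x‖) := by
        rw [ENNReal.ofReal_add posLog_nonneg posLog_nonneg, ofReal_posLog ‖x‖]

lemma lintegral_ofReal_log_norm_apply_lt_top [MeasurableSpace E] {ν : Measure E}
    [IsFiniteMeasure ν] (hν : ∫⁻ x, ENNReal.ofReal (log ‖x‖) ∂ν < ∞) (L : E →L[ℝ] F) :
    ∫⁻ x, ENNReal.ofReal (log ‖L x‖) ∂ν < ∞ :=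
  calc ∫⁻ x, ENNReal.ofReal (log ‖L x‖) ∂ν
      ≤ ∫⁻ x, ENNReal.ofReal (log⁺ ‖L‖) + ENNReal.ofReal (log ‖x‖) ∂ν :=
        lintegral_mono (ofReal_log_norm_apply_le L)
    _ = ENNReal.ofReal (log⁺ ‖L‖) * ν Set.univ + ∫⁻ x, ENNReal.ofReal (log ‖x‖) ∂ν := by
        rw [lintegral_add_left measurable_const, lintegral_const]
    _ < ∞ := ENNReal.add_lt_top.2 ⟨ENNReal.mul_lt_top ofReal_lt_top (measure_lt_top ν _), hν⟩

end LogMoment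

lemma ClassH.map_clm {d : ℕ} {ν : Measure (EuclideanSpace ℝ (Fin d))} (hν : ClassH ν)
    (L : EuclideanSpace ℝ (Fin d) →L[ℝ] EuclideanSpace ℝ (Fin d)) :
    ClassH (ν.map L) := by
  have := hν.1
  have hlog := hν.2
  refine ⟨Measure.isProbabilityMeasure_map L.measurable.aemeasurable, ?_⟩
  rw [setLIntegral_one_lt_norm_ofReal_log] at hlog ⊢
  rw [lintegral_map measurable_norm.log.ennreal_ofReal L.measurable]
  exact lintegral_ofReal_log_norm_apply_lt_top hlog L

lemma IsOpDickman.map_clm {d : ℕ} {Q : Matrix (Fin d) (Fin d) ℝ}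
    {ν μ : Measure (EuclideanSpace ℝ (Fin d))} [SFinite ν] [SFinite μ] (hμ : IsOpDickman Q ν μ)
    (L : EuclideanSpace ℝ (Fin d) →L[ℝ] EuclideanSpace ℝ (Fin d))
    (hL : ∀ s x, mAct Q s (L x) = L (mAct Q s x)) :
    IsOpDickman Q (ν.map L) (μ.map L) := by
  unfold IsOpDickman at hμ ⊢
  set F := fun p : ℝ × (EuclideanSpace ℝ (Fin d) × EuclideanSpace ℝ (Fin d)) =>
    mAct Q p.1 (p.2.1 + p.2.2)
  have hF : Measurable F := (measurable_mAct_uncurry Q).comp <|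
    measurable_fst.prodMk (measurable_snd.fst.add measurable_snd.snd)
  have hL_meas := L.measurable
  have hFL : F ∘ Prod.map id (Prod.map L L) = L ∘ F := by
    funext p
    simp only [F, Function.comp_apply, Prod.map_fst, Prod.map_snd, id, ← map_add, hL]
  rw [Measure.map_prod_map _ _ hL_meas hL_meas, ← Measure.map_id (μ := unif01),
    Measure.map_prod_map _ _ measurable_id (hL_meas.prodMap hL_meas),
    Measure.map_map hF (measurable_id.prodMap (hL_meas.prodMap hL_meas)), hFL,
    ← Measure.map_map hL_meas hF, hμ]

theorem opDickman_map_mpow_commuting_general {d : ℕ} (Q : Matrix (Fin d) (Fin d) ℝ)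
    (ν μ : Measure (EuclideanSpace ℝ (Fin d))) (hν : ClassH ν) [IsProbabilityMeasure μ]
    (hμ : IsOpDickman Q ν μ) (t : ℝ)
    (A : Matrix (Fin d) (Fin d) ℝ) (hAQ : A * Q = Q * A) :
    ClassH (Measure.map (mAct A t) ν) ∧
      IsOpDickman Q (Measure.map (mAct A t) ν) (Measure.map (mAct A t) μ) := by
  have := hν.1
  rw [mAct_eq_toEuclideanCLM]
  exact ⟨hν.map_clm _, hμ.map_clm _ fun s x => mAct_mAct_comm hAQ.symm s t x⟩

/-- Closure of `D(Q, H)` under the transformations `x ↦ t^A x` for `A` commuting with `Q`: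
if `μ` is the operator Dickman distribution `D(Q,ν)`, `t > 0` and `AQ = QA`, then the
pushforward `t^A ν` is in `H` and the pushforward `t^A μ` is `D(Q, t^A ν)`. -/
theorem opDickman_map_mpow_commuting {d : ℕ} (Q : Matrix (Fin d) (Fin d) ℝ) (hQ : MPlus Q)
    (ν μ : Measure (EuclideanSpace ℝ (Fin d))) (hν : ClassH ν) [IsProbabilityMeasure μ]
    (hμ : IsOpDickman Q ν μ) (t : ℝ) (ht : 0 < t)
    (A : Matrix (Fin d) (Fin d) ℝ) (hAQ : A * Q = Q * A) :
    ClassH (Measure.map (mAct A t) ν) ∧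
      IsOpDickman Q (Measure.map (mAct A t) ν) (Measure.map (mAct A t) μ) :=
  opDickman_map_mpow_commuting_general Q ν μ hν hμ t A hAQ

end
end

section
/- Let θ > 0, let ν ∈ H, and let μ be a probability measure on ℝ^d satisfying the fixed-point equation defining D((1/θ)·I, ν), where I is the d×d identity matrix. Let T : ℝ^d → ℝ^d be a linear map such that the pushforward of ν under T equals ν. Then the pushforward of μ under T equals μ. In particular, if ν is rotationally invariant then μ is rotationally invariant. -/
open MeasureTheory ProbabilityTheory Matrix Filter Topology

noncomputable section

/-!
Pushing the fixed-point equation forward by `T` shows that `T μ` is again a solution of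
`D((1/θ)I, ν)`, so it suffices that the solution is unique. In terms of characteristic
functions the equation reads `φ(t) = ∫₀¹ φ(s^{1/θ} t) ψ(s^{1/θ} t) ds` with `|ψ| ≤ 1`, so the
difference `g = |φ₁ - φ₂|` of two solutions satisfies `g(t) ≤ ∫₀¹ g(s^{1/θ} t) ds` and `g(0) = 0`.
At a maximum point `z` of `g` on a ball the integrand stays below `g(z)` and is strictly smaller
near `s = 0`, which forces `g(z) = 0`.
-/

theorem nonpos_of_le_intervalIntegral_rpow_smul {E : Type*} [NormedAddCommGroup E]
    [NormedSpace ℝ E] [ProperSpace E] {g : E → ℝ} (hg : Continuous g) (hg0 : g 0 ≤ 0)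
    {a : ℝ} (ha : 0 < a) (hle : ∀ t, g t ≤ ∫ s in (0 : ℝ)..1, g (s ^ a • t)) (t : E) :
    g t ≤ 0 := by
  obtain ⟨z, hz, hmax⟩ := (isCompact_closedBall (0 : E) ‖t‖).exists_isMaxOn
    ⟨t, by simp⟩ hg.continuousOn
  refine (hmax (by simp : t ∈ Metric.closedBall (0 : E) ‖t‖)).trans (not_lt.1 fun hpos => ?_)
  have hcont : Continuous fun s : ℝ => g (s ^ a • z) :=
    hg.comp ((Real.continuous_rpow_const ha.le).smul continuous_const)
  have hlt : ∫ s in (0 : ℝ)..1, g (s ^ a • z) < ∫ _ in (0 : ℝ)..1, g z := by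
    refine intervalIntegral.integral_lt_integral_of_continuousOn_of_le_of_exists_lt one_pos
      hcont.continuousOn continuousOn_const (fun s hs => hmax ?_) ⟨0, by simp, ?_⟩
    · have hs1 : s ^ a ≤ 1 := Real.rpow_le_one hs.1.le hs.2 ha.le
      simp only [Metric.mem_closedBall, dist_zero_right, norm_smul, Real.norm_eq_abs,
        abs_of_nonneg (Real.rpow_nonneg hs.1.le a)] at hz ⊢
      nlinarith [norm_nonneg z]
    · simpa [Real.zero_rpow ha.ne'] using hg0.trans_lt hpos
  rw [intervalIntegral.integral_const, sub_zero, one_smul] at hlt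
  exact (hle z).not_gt hlt

instance : IsProbabilityMeasure unif01 :=
  ⟨by simp [unif01, Real.volume_Icc]⟩

theorem integral_unif01 {F : Type*} [NormedAddCommGroup F] [NormedSpace ℝ F] (f : ℝ → F) :
    ∫ s, f s ∂unif01 = ∫ s in (0 : ℝ)..1, f s := by
  rw [intervalIntegral.integral_of_le zero_le_one, ← integral_Icc_eq_integral_Ioc]
  rfl

namespace IsScalarDickman

variable {d : ℕ} {θ : ℝ}

open Complex RealInnerProductSpace in
theorem charFun_eq {ν μ : Measure (EuclideanSpace ℝ (Fin d))} [IsFiniteMeasure ν]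
    [IsFiniteMeasure μ] (hμ : IsScalarDickman θ ν μ) (t : EuclideanSpace ℝ (Fin d)) :
    charFun μ t = ∫ s in (0 : ℝ)..1, charFun μ (s ^ (1/θ) • t) * charFun ν (s ^ (1/θ) • t) := by
  have hF : Measurable fun p : ℝ × (EuclideanSpace ℝ (Fin d) × EuclideanSpace ℝ (Fin d)) =>
      p.1 ^ (1/θ) • (p.2.1 + p.2.2) := by fun_prop
  have hint : Integrable (fun p : ℝ × (EuclideanSpace ℝ (Fin d) × EuclideanSpace ℝ (Fin d)) =>
      cexp (⟪p.1 ^ (1/θ) • (p.2.1 + p.2.2), t⟫ * I)) (unif01.prod (μ.prod ν)) := by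
    refine (integrable_const (1 : ℝ)).mono (by fun_prop) (ae_of_all _ fun p => ?_)
    simp [Complex.norm_exp_ofReal_mul_I]
  conv_lhs => rw [← hμ, charFun_apply, integral_map hF.aemeasurable (by fun_prop),
    integral_prod _ hint]
  rw [← integral_unif01]
  congr 1 with s
  simp_rw [real_inner_smul_left, ← real_inner_smul_right, inner_add_left, ofReal_add, add_mul,
    Complex.exp_add]
  exact integral_prod_mul (fun x => cexp (⟪x, s ^ (1/θ) • t⟫ * I))
    (fun w => cexp (⟪w, s ^ (1/θ) • t⟫ * I))

theorem unique (hθ : 0 < θ)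
    {ν μ₁ μ₂ : Measure (EuclideanSpace ℝ (Fin d))} [IsProbabilityMeasure ν]
    [IsProbabilityMeasure μ₁] [IsProbabilityMeasure μ₂]
    (h₁ : IsScalarDickman θ ν μ₁) (h₂ : IsScalarDickman θ ν μ₂) : μ₁ = μ₂ := by
  set g := fun t => ‖charFun μ₁ t - charFun μ₂ t‖ with hg_def
  have hg : Continuous g := by fun_prop
  have hψ : Continuous (charFun ν) := continuous_charFun
  have hle : ∀ t, g t ≤ ∫ s in (0 : ℝ)..1, g (s ^ (1/θ) • t) := by
    intro t
    have hs : Continuous fun s : ℝ => s ^ (1/θ) • t :=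
      (Real.continuous_rpow_const (one_div_pos.2 hθ).le).smul continuous_const
    simp only [hg_def]
    rw [h₁.charFun_eq, h₂.charFun_eq,
      ← intervalIntegral.integral_sub ((by fun_prop : Continuous _).intervalIntegrable _ _)
        ((by fun_prop : Continuous _).intervalIntegrable _ _)]
    refine (intervalIntegral.norm_integral_le_integral_norm zero_le_one).trans
      (intervalIntegral.integral_mono_on zero_le_one
        ((by fun_prop : Continuous _).intervalIntegrable _ _)
        ((by fun_prop : Continuous _).intervalIntegrable _ _) fun s _ => ?_)
    rw [← sub_mul, norm_mul]
    exact mul_le_of_le_one_right (norm_nonneg _) (norm_charFun_le_one _)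
  refine Measure.ext_of_charFun (funext fun t => sub_eq_zero.1 (norm_le_zero_iff.1 ?_))
  exact nonpos_of_le_intervalIntegral_rpow_smul hg (by simp [g, charFun_zero])
    (one_div_pos.2 hθ) hle t

theorem map_linearMap {ν μ : Measure (EuclideanSpace ℝ (Fin d))} [SFinite ν] [SFinite μ]
    (hμ : IsScalarDickman θ ν μ) (T : EuclideanSpace ℝ (Fin d) →ₗ[ℝ] EuclideanSpace ℝ (Fin d))
    (hT : Measure.map T ν = ν) : IsScalarDickman θ ν (Measure.map T μ) := by
  have hTm : Measurable T := T.continuous_of_finiteDimensional.measurable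
  have hF : Measurable fun p : ℝ × (EuclideanSpace ℝ (Fin d) × EuclideanSpace ℝ (Fin d)) =>
      p.1 ^ (1/θ) • (p.2.1 + p.2.2) := by fun_prop
  unfold IsScalarDickman at *
  calc _ = Measure.map _
        (Measure.map (Prod.map id (Prod.map T T)) (unif01.prod (μ.prod ν))) := by
        rw [← Measure.map_prod_map _ _ measurable_id (hTm.prodMap hTm), Measure.map_id,
          ← Measure.map_prod_map _ _ hTm hTm, hT]
    _ = Measure.map T (Measure.map _ (unif01.prod (μ.prod ν))) := by
        rw [Measure.map_map hF (measurable_id.prodMap (hTm.prodMap hTm)),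
          Measure.map_map hTm hF]
        congr 1 with p
        simp
    _ = Measure.map T μ := by rw [hμ]

end IsScalarDickman

/-- If `μ` is the operator Dickman distribution `D((1/θ)I, ν)` and `ν` is invariant under a
linear map `T`, then `μ` is invariant under `T`. -/
theorem opDickman_invariant_of_innovation_invariant {d : ℕ} (θ : ℝ) (hθ : 0 < θ)
    (ν μ : Measure (EuclideanSpace ℝ (Fin d))) (hν : ClassH ν) [IsProbabilityMeasure μ]
    (hμ : IsScalarDickman θ ν μ)
    (T : EuclideanSpace ℝ (Fin d) →ₗ[ℝ] EuclideanSpace ℝ (Fin d))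
    (hT : Measure.map (⇑T) ν = ν) :
    Measure.map (⇑T) μ = μ := by
  have := hν.1
  have := Measure.isProbabilityMeasure_map (μ := μ) T.continuous_of_finiteDimensional.aemeasurable
  exact (hμ.map_linearMap T hT).unique hθ hμ
end
end
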